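/- arXiv:2101.07043 — 6 statements merged into one kernel-verified Lean document; each statement's English description precedes it below -/
import Mathlib

section
/- Under the FTPL caching policy with a constant learning rate η > 0, for every t ≥ 2 and every realization of the Gaussian perturbation with distinct perturbed counts, |S_t \ S_{t−1}| ≤ 1; that is, at most one file of the cache is replaced per slot. -/
/-!
A request at slot `t - 1` raises the perturbed score of the requested file `f (t - 1)` by one and
leaves every other score unchanged. A file `i` entering the cache must overtake a file `k` leaving
it, i.e. gain strictly more score than `k`; since no score decreases, `i` gained something, so
`i = f (t - 1)`.
-/

section TopSets

variable {ι : Type*} [DecidableEq ι] {s s' : ι → ℝ} {S S' : Finset ι}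

theorem sub_lt_sub_of_mem_sdiff_of_mem_sdiff (hs : Function.Injective s)
    (hS : ∀ i ∈ S, ∀ j ∉ S, s j ≤ s i) (hS' : ∀ i ∈ S', ∀ j ∉ S', s' j ≤ s' i)
    {i k : ι} (hi : i ∈ S' \ S) (hk : k ∈ S \ S') :
    s' k - s k < s' i - s i := by
  rw [Finset.mem_sdiff] at hi hk
  have hik : i ≠ k := fun h => hi.2 (h ▸ hk.1)
  have hlt : s i < s k := (hS k hk.1 i hi.2).lt_of_ne (hs.ne hik)
  linarith [hS' i hi.1 k hk.2]

theorem sdiff_subset_singleton_of_le_of_eq_off (hs : Function.Injective s)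
    (hS : ∀ i ∈ S, ∀ j ∉ S, s j ≤ s i) (hS' : ∀ i ∈ S', ∀ j ∉ S', s' j ≤ s' i)
    (hcard : S'.card ≤ S.card) {a : ι} (hle : s ≤ s') (heq : ∀ i ≠ a, s' i = s i) :
    S' \ S ⊆ {a} := by
  intro i hi
  rw [Finset.mem_singleton]
  by_contra hia
  obtain ⟨k, hk⟩ : (S \ S').Nonempty := by
    rw [Finset.sdiff_nonempty]
    intro hSS'
    rw [Finset.mem_sdiff, Finset.eq_of_subset_of_card_le hSS' hcard] at hi
    exact hi.2 hi.1
  have hgain := sub_lt_sub_of_mem_sdiff_of_mem_sdiff hs hS hS' hi hk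
  rw [heq i hia, sub_self] at hgain
  linarith [hle k]

end TopSets

theorem cumulative_count_succ {ι : Type*} [DecidableEq ι] (f : ℕ → ι) (X : ℕ → ι → ℝ)
    (hX : ∀ t i, X t i = ∑ τ ∈ Finset.Ico 1 t, if f τ = i then (1 : ℝ) else 0)
    {t : ℕ} (ht : 1 ≤ t) (i : ι) :
    X (t + 1) i = X t i + if f t = i then 1 else 0 := by
  rw [hX, hX, Finset.sum_Ico_succ_top ht]

theorem ftpl_at_most_one_eviction_per_slot_general
    (N C : ℕ)
    (f : ℕ → Fin N)
    (X : ℕ → Fin N → ℝ)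
    (hX : ∀ t i, X t i = ∑ τ ∈ Finset.Ico 1 t, if f τ = i then (1 : ℝ) else 0)
    (γ : Fin N → ℝ)
    (η : ℝ)
    -- all perturbed counts are distinct (this holds with probability one)
    (hdistinct : ∀ t, ∀ i j : Fin N, i ≠ j → X t i + η * γ i ≠ X t j + η * γ j)
    (S : ℕ → Finset (Fin N))
    (hScard : ∀ t, (S t).card = C)
    (hStop : ∀ t, ∀ i ∈ S t, ∀ j ∉ S t, X t j + η * γ j ≤ X t i + η * γ i)
    (t : ℕ) (ht : 2 ≤ t) :
    (S t \ S (t - 1)).card ≤ 1 := by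
  obtain ⟨u, rfl⟩ : ∃ u, t = u + 1 := ⟨t - 1, by omega⟩
  have hcount := cumulative_count_succ f X hX (by omega : 1 ≤ u)
  have hsub : S (u + 1) \ S u ⊆ {f u} :=
    sdiff_subset_singleton_of_le_of_eq_off (s := fun i => X u i + η * γ i)
      (s' := fun i => X (u + 1) i + η * γ i)
      (fun i j h => not_imp_not.mp (hdistinct u i j) h) (hStop u) (hStop (u + 1))
      (by rw [hScard, hScard])
      (fun i => by simp only [hcount]; split_ifs <;> linarith)
      (fun i hi => by simp only [hcount, if_neg (Ne.symm hi), add_zero])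
  simpa using Finset.card_le_card hsub

/-- Under the FTPL caching policy with a constant learning rate `η > 0`,
for every `t ≥ 2` and every realization of the perturbation with distinct perturbed counts,
`|S_t \ S_{t−1}| ≤ 1`: at most one file of the cache is replaced per slot. -/
theorem ftpl_at_most_one_eviction_per_slot
    (N C : ℕ) (hC : 0 < C) (hCN : C < N)
    (f : ℕ → Fin N)
    (X : ℕ → Fin N → ℝ)
    (hX : ∀ t i, X t i = ∑ τ ∈ Finset.Ico 1 t, if f τ = i then (1 : ℝ) else 0)
    (γ : Fin N → ℝ)
    (η : ℝ) (hη : 0 < η)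
    -- all perturbed counts are distinct (this holds with probability one)
    (hdistinct : ∀ t, ∀ i j : Fin N, i ≠ j → X t i + η * γ i ≠ X t j + η * γ j)
    (S : ℕ → Finset (Fin N))
    (hScard : ∀ t, (S t).card = C)
    (hStop : ∀ t, ∀ i ∈ S t, ∀ j ∉ S t, X t j + η * γ j ≤ X t i + η * γ i)
    (t : ℕ) (ht : 2 ≤ t) :
    (S t \ S (t - 1)).card ≤ 1 :=
  ftpl_at_most_one_eviction_per_slot_general N C f X hX γ η hdistinct S hScard hStop t ht
end

section
/- Under the FTPL caching policy with a constant learning rate η > 0, for every slot t the probability of a cache change is bounded as P(y_{t+1} ≠ y_t) ≤ 1/(sqrt(2π)·η), where the probability is over the Gaussian perturbation γ. -/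
/-!
Put `v = X t + η γ`; then the perturbed counts at slot `t + 1` are `v + e_{f t}`. Almost surely
both vectors are injective, so their top-`C` sets are unique, and the cache can only change by
`f t` entering it. That forces `v (f t)` into `[m - 1, m]`, where `m` is the `C`-th largest of the
other coordinates of `v`. As `m` is a function of `(γ j)_{j ≠ f t}`, it is independent of
`γ (f t)`, so conditioning on it bounds the probability by the standard Gaussian mass of an
interval of length `1 / η`, which is at most `1 / (√(2π) η)` since the density is at most `1 / √(2π)`.
-/

open Function Finset MeasureTheory ProbabilityTheory Real
open scoped ENNReal NNReal

def IsTopSet {ι α : Type*} [LE α] (v : ι → α) (s : Finset ι) : Prop :=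
  ∀ i ∈ s, ∀ j ∉ s, v j ≤ v i

/-- Max–min formula; for `k = 0` or `k > Fintype.card κ` it takes the junk value `0`. -/
noncomputable def kthLargest {κ : Type*} (k : ℕ) (w : κ → ℝ) : ℝ :=
  ⨆ T : {T : Finset κ // T.card = k}, ⨅ j : T.1, w j

namespace IsTopSet

variable {ι α : Type*} {s s' : Finset ι}

theorem eq_of_injective [LinearOrder α] {v : ι → α} (hv : Injective v) (hs : IsTopSet v s)
    (hs' : IsTopSet v s') (hcard : s.card = s'.card) : s = s' := by
  by_contra hne
  obtain ⟨j, hjs, hjs'⟩ := not_subset.1 fun h => hne (eq_of_subset_of_card_le h hcard.ge)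
  obtain ⟨k, hks', hks⟩ := not_subset.1 fun h => hne (eq_of_subset_of_card_le h hcard.le).symm
  exact hks (hv (le_antisymm (hs' k hks' j hjs') (hs j hjs k hks)) ▸ hjs)

theorem subtype [DecidableEq ι] [LE α] {v : ι → α} (hs : IsTopSet v s) (K : Finset ι) :
    IsTopSet (fun j : K => v j) (s.subtype (· ∈ K)) := fun i hi j hj =>
  hs i (mem_subtype.1 hi) j fun h => hj (mem_subtype.2 h)

section Bump

variable [DecidableEq ι] [AddCommMonoid α] [LinearOrder α] [IsOrderedAddMonoid α]
  {v : ι → α} {i₀ : ι} {δ : α}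

theorem add_single_of_mem (hs : IsTopSet v s) (hi₀ : i₀ ∈ s) (hδ : 0 ≤ δ) :
    IsTopSet (v + Pi.single i₀ δ) s := by
  intro i hi j hj
  rw [Pi.add_apply, Pi.add_apply, Pi.single_eq_of_ne (ne_of_mem_of_not_mem hi₀ hj).symm, add_zero]
  exact (hs i hi j hj).trans (le_add_of_nonneg_right ((Pi.single_nonneg (α := fun _ => α)).2 hδ i))

theorem of_add_single_of_notMem (hs : IsTopSet (v + Pi.single i₀ δ) s) (hi₀ : i₀ ∉ s)
    (hδ : 0 ≤ δ) : IsTopSet v s := by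
  intro i hi j hj
  have := hs i hi j hj
  rw [Pi.add_apply, Pi.add_apply, Pi.single_eq_of_ne (ne_of_mem_of_not_mem hi hi₀), add_zero]
    at this
  exact (le_add_of_nonneg_right ((Pi.single_nonneg (α := fun _ => α)).2 hδ j)).trans this

theorem notMem_and_mem_of_ne (hv : Injective v) (hv' : Injective (v + Pi.single i₀ δ))
    (hδ : 0 ≤ δ) (hs : IsTopSet v s) (hs' : IsTopSet (v + Pi.single i₀ δ) s')
    (hcard : s.card = s'.card) (hne : s ≠ s') : i₀ ∉ s ∧ i₀ ∈ s' :=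
  ⟨fun hi₀ => hne ((hs.add_single_of_mem hi₀ hδ).eq_of_injective hv' hs' hcard),
    of_not_not fun hi₀ => hne (hs.eq_of_injective hv (hs'.of_add_single_of_notMem hi₀ hδ) hcard)⟩

end Bump

end IsTopSet

section KthLargest

variable {κ : Type*} [Fintype κ]

theorem measurable_kthLargest (k : ℕ) : Measurable (kthLargest k : (κ → ℝ) → ℝ) :=
  Measurable.iSup fun _ => Measurable.iInf fun _ => measurable_pi_apply _

theorem IsTopSet.kthLargest_card_eq_iInf {w : κ → ℝ} {s : Finset κ} (hs : IsTopSet w s)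
    (hne : s.Nonempty) : kthLargest s.card w = ⨅ j : s, w j := by
  have : Nonempty s := hne.to_subtype
  have : Nonempty {T : Finset κ // T.card = s.card} := ⟨⟨s, rfl⟩⟩
  refine le_antisymm (ciSup_le fun ⟨T, hT⟩ => ?_)
    (le_ciSup_of_le (Set.finite_range _).bddAbove ⟨s, rfl⟩ le_rfl)
  by_cases hTs : T ⊆ s
  · obtain rfl : T = s := eq_of_subset_of_card_le hTs hT.ge
    exact le_rfl
  · obtain ⟨k, hkT, hks⟩ := not_subset.1 hTs
    exact (ciInf_le (Set.finite_range _).bddBelow ⟨k, hkT⟩).trans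
      (le_ciInf fun j => hs j j.2 k hks)

end KthLargest

theorem IsTopSet.mem_Icc_kthLargest_of_ne {ι : Type*} [Fintype ι] [DecidableEq ι] {v : ι → ℝ}
    {i₀ : ι} {δ : ℝ} {k : ℕ} {s s' : Finset ι} (hv : Injective v)
    (hv' : Injective (v + Pi.single i₀ δ)) (hδ : 0 ≤ δ) (hs : IsTopSet v s)
    (hs' : IsTopSet (v + Pi.single i₀ δ) s') (hcard : s.card = k) (hcard' : s'.card = k)
    (hk : 0 < k) (hne : s ≠ s') :
    v i₀ ∈ Set.Icc (kthLargest k (fun j : ({i₀}ᶜ : Finset ι) => v j) - δ)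
      (kthLargest k (fun j : ({i₀}ᶜ : Finset ι) => v j)) := by
  subst hcard
  obtain ⟨hi₀s, hi₀s'⟩ := hs.notMem_and_mem_of_ne hv hv' hδ hs' hcard'.symm hne
  have hsK : ∀ j ∈ s, j ∈ ({i₀}ᶜ : Finset ι) := fun j hj => by
    simpa using ne_of_mem_of_not_mem hj hi₀s
  set sK := s.subtype (· ∈ ({i₀}ᶜ : Finset ι))
  have hcardK : sK.card = s.card := by rw [card_subtype, filter_true_of_mem hsK]
  have hneK : sK.Nonempty := card_pos.1 (hcardK ▸ hk)
  have : Nonempty sK := hneK.to_subtype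
  rw [← hcardK, (hs.subtype _).kthLargest_card_eq_iInf hneK]
  obtain ⟨j, hjs, hjs'⟩ := not_subset.1 fun h => hne (eq_of_subset_of_card_le h hcard'.le)
  constructor
  · have hj := hs' i₀ hi₀s' j hjs'
    simp only [Pi.add_apply, Pi.single_eq_same, Pi.single_eq_of_ne (ne_of_mem_of_not_mem hjs hi₀s),
      add_zero] at hj
    have : ⨅ k : sK, v k.1.1 ≤ v j :=
      ciInf_le (Set.finite_range _).bddBelow (⟨⟨j, hsK j hjs⟩, mem_subtype.2 hjs⟩ : sK)
    linarith
  · exact le_ciInf fun j : sK => hs j.1.1 (mem_subtype.1 j.2) i₀ hi₀s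

namespace ProbabilityTheory

theorem IndepFun.measure_prodMk_mem_le_of_slice_le {Ω α β : Type*}
    [MeasurableSpace Ω] [MeasurableSpace α] [MeasurableSpace β] {μ : Measure Ω}
    [IsProbabilityMeasure μ] {X : Ω → α} {Y : Ω → β} (hXY : IndepFun X Y μ)
    (hX : AEMeasurable X μ) (hY : AEMeasurable Y μ) {s : Set (α × β)} (hs : MeasurableSet s)
    {c : ℝ≥0∞} (hc : ∀ a, μ.map Y (Prod.mk a ⁻¹' s) ≤ c) :
    μ {ω | (X ω, Y ω) ∈ s} ≤ c := by
  have : IsProbabilityMeasure (μ.map X) := Measure.isProbabilityMeasure_map hX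
  calc μ {ω | (X ω, Y ω) ∈ s} = μ.map (fun ω => (X ω, Y ω)) s :=
        (Measure.map_apply_of_aemeasurable (hX.prodMk hY) hs).symm
    _ = ∫⁻ a, μ.map Y (Prod.mk a ⁻¹' s) ∂μ.map X := by
        rw [(indepFun_iff_map_prod_eq_prod_map_map hX hY).1 hXY, Measure.prod_apply hs]
    _ ≤ ∫⁻ _, c ∂μ.map X := lintegral_mono hc
    _ = c := by simp

theorem gaussianReal_Icc_le (m : ℝ) {v : ℝ≥0} (hv : v ≠ 0) (a b : ℝ) :
    gaussianReal m v (Set.Icc a b) ≤ ENNReal.ofReal ((b - a) / √(2 * π * v)) := by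
  have hpdf : ∀ x, gaussianPDF m v x ≤ ENNReal.ofReal (√(2 * π * v))⁻¹ := fun x => by
    refine ENNReal.ofReal_le_ofReal (mul_le_of_le_one_right (by positivity) (exp_le_one_iff.2 ?_))
    rw [neg_div]
    exact neg_nonpos.2 (by positivity)
  calc gaussianReal m v (Set.Icc a b) = ∫⁻ x in Set.Icc a b, gaussianPDF m v x :=
        gaussianReal_apply m hv _
    _ ≤ ∫⁻ _ in Set.Icc a b, ENNReal.ofReal (√(2 * π * v))⁻¹ := lintegral_mono hpdf
    _ = ENNReal.ofReal ((b - a) / √(2 * π * v)) := by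
        rw [setLIntegral_const, volume_Icc, ← ENNReal.ofReal_mul (by positivity), div_eq_inv_mul]

theorem gaussianReal_setOf_const_add_mul_mem_Icc_le (x : ℝ) {η : ℝ} (hη : 0 < η) (a b : ℝ) :
    gaussianReal 0 1 {y | x + η * y ∈ Set.Icc a b} ≤
      ENNReal.ofReal ((b - a) / (√(2 * π) * η)) := by
  have hIcc : {y | x + η * y ∈ Set.Icc a b} = Set.Icc ((a - x) / η) ((b - x) / η) := by
    ext y
    simp only [Set.mem_ofPred_eq, Set.mem_Icc, div_le_iff₀ hη, le_div_iff₀ hη]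
    constructor <;> rintro ⟨h₁, h₂⟩ <;> constructor <;> linarith
  rw [hIcc]
  refine (gaussianReal_Icc_le 0 one_ne_zero _ _).trans_eq (congrArg ENNReal.ofReal ?_)
  rw [NNReal.coe_one, mul_one]
  field_simp
  ring

theorem iIndepFun.ae_injective_const_add_mul {Ω ι : Type*} [MeasurableSpace Ω]
    {μ : Measure Ω} [IsProbabilityMeasure μ] [Countable ι] {γ : ι → Ω → ℝ}
    (hγ : iIndepFun γ μ) (hmeas : ∀ i, AEMeasurable (γ i) μ)
    (hatom : ∀ i, NullSingletonClass (μ.map (γ i))) (x : ι → ℝ) {η : ℝ} (hη : η ≠ 0) :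
    ∀ᵐ ω ∂μ, Injective fun i => x i + η * γ i ω := by
  have hpair : ∀ i j, i ≠ j → ∀ᵐ ω ∂μ, x i + η * γ i ω ≠ x j + η * γ j ω := by
    intro i j hij
    refine ae_iff.2 (nonpos_iff_eq_zero.1 ?_)
    simp only [not_not]
    refine (hγ.indepFun hij.symm).measure_prodMk_mem_le_of_slice_le (hmeas j) (hmeas i)
      (s := {p | x i + η * p.2 = x j + η * p.1}) (measurableSet_eq_fun (by fun_prop) (by fun_prop))
      fun a => (measure_mono_null (fun y hy => ?_) (measure_singleton ((x j + η * a - x i) / η))).le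
    simp only [Set.mem_preimage, Set.mem_ofPred_eq] at hy
    rw [Set.mem_singleton_iff, eq_div_iff hη]
    linarith
  have hall : ∀ᵐ ω ∂μ, ∀ i j, i ≠ j → x i + η * γ i ω ≠ x j + η * γ j ω :=
    ae_all_iff.2 fun i => ae_all_iff.2 fun j => by
      by_cases hij : i = j
      · exact Filter.Eventually.of_forall fun _ h => (h hij).elim
      · exact (hpair i j hij).mono fun _ h _ => h
  filter_upwards [hall] with ω h i j hxy
  by_contra hij
  exact h i j hij hxy

theorem iIndepFun.indepFun_compl_singleton {Ω ι β : Type*} [MeasurableSpace Ω]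
    [MeasurableSpace β] {μ : Measure Ω} [Fintype ι] [DecidableEq ι] {γ : ι → Ω → β}
    (hγ : iIndepFun γ μ) (hmeas : ∀ i, AEMeasurable (γ i) μ) (i : ι) :
    IndepFun (fun ω (j : ({i}ᶜ : Finset ι)) => γ j ω) (γ i) μ :=
  (hγ.indepFun_finset₀ {i}ᶜ {i} disjoint_compl_left hmeas).comp measurable_id
    (measurable_pi_apply (⟨i, mem_singleton_self i⟩ : ({i} : Finset ι)))

end ProbabilityTheory

theorem count_succ_add_eq_add_single {ι : Type*} [DecidableEq ι] {f : ℕ → ι} {X : ℕ → ι → ℝ}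
    (hX : ∀ t i, X t i = ∑ τ ∈ Ico 1 t, if f τ = i then (1 : ℝ) else 0) {t : ℕ} (ht : 1 ≤ t)
    (g : ι → ℝ) : (fun i => X (t + 1) i + g i) = (fun i => X t i + g i) + Pi.single (f t) 1 := by
  ext i
  rw [Pi.add_apply, hX, hX, sum_Ico_succ_top ht, Pi.single_apply]
  simp only [eq_comm (a := i)]
  ring

theorem ftpl_constant_rate_switching_probability_general
    {Ω : Type*} [MeasureSpace Ω] [IsProbabilityMeasure (ℙ : Measure Ω)]
    (N C : ℕ) (hC : 0 < C)
    (f : ℕ → Fin N)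
    (X : ℕ → Fin N → ℝ)
    (hX : ∀ t i, X t i = ∑ τ ∈ Finset.Ico 1 t, if f τ = i then (1 : ℝ) else 0)
    (γ : Fin N → Ω → ℝ)
    (hγindep : iIndepFun γ ℙ)
    (hγgauss : ∀ i, Measure.map (γ i) ℙ = gaussianReal 0 1)
    (η : ℝ) (hη : 0 < η)
    (S : ℕ → Ω → Finset (Fin N))
    (hScard : ∀ t ω, (S t ω).card = C)
    (hStop : ∀ t ω, ∀ i ∈ S t ω, ∀ j ∉ S t ω,
      X t j + η * γ j ω ≤ X t i + η * γ i ω)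
    (t : ℕ) (ht : 1 ≤ t) :
    ℙ {ω | S (t + 1) ω ≠ S t ω} ≤ ENNReal.ofReal (1 / (Real.sqrt (2 * Real.pi) * η)) := by
  set i₀ := f t
  let K : Finset (Fin N) := {i₀}ᶜ
  let m : (K → ℝ) → ℝ := fun w => kthLargest C fun j : K => X t j + η * w j
  let B : Set ((K → ℝ) × ℝ) := {p | X t i₀ + η * p.2 ∈ Set.Icc (m p.1 - 1) (m p.1)}
  have hγmeas : ∀ i, AEMeasurable (γ i) ℙ := fun i =>
    AEMeasurable.of_map_ne_zero (by rw [hγgauss i]; exact IsProbabilityMeasure.ne_zero _)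
  have hgeneric := fun x => hγindep.ae_injective_const_add_mul hγmeas
    (fun i => by rw [hγgauss i]; exact nullSingletonClass_gaussianReal one_ne_zero) x hη.ne'
  have hswitch : ∀ᵐ ω ∂ℙ, S (t + 1) ω ≠ S t ω → (fun j : K => γ j ω, γ i₀ ω) ∈ B := by
    filter_upwards [hgeneric (X t), hgeneric (X (t + 1))] with ω hv hv' hne
    have hs : IsTopSet (fun i => X t i + η * γ i ω) (S t ω) := hStop t ω
    have hs' : IsTopSet (fun i => X (t + 1) i + η * γ i ω) (S (t + 1) ω) := hStop (t + 1) ω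
    rw [count_succ_add_eq_add_single hX ht] at hv' hs'
    have h := hs.mem_Icc_kthLargest_of_ne hv hv' zero_le_one hs' (hScard t ω) (hScard _ ω) hC
      hne.symm
    exact h
  have hBmeas : MeasurableSet B := by
    have hm : Measurable m := (measurable_kthLargest C).comp (by fun_prop)
    simp only [B, Set.mem_Icc, Set.ofPred_and]
    exact (measurableSet_le (by fun_prop) (by fun_prop)).inter
      (measurableSet_le (by fun_prop) (by fun_prop))
  refine (measure_mono_ae hswitch).trans
    ((hγindep.indepFun_compl_singleton hγmeas i₀).measure_prodMk_mem_le_of_slice_le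
      (aemeasurable_pi_lambda _ fun j => hγmeas j) (hγmeas i₀) hBmeas fun w => ?_)
  rw [hγgauss, ← sub_sub_cancel (m w) 1]
  exact gaussianReal_setOf_const_add_mul_mem_Icc_le _ hη _ _

/-- Under the FTPL caching policy with a constant learning rate `η > 0`,
for every slot `t` the probability of a cache change is bounded as
`P(y_{t+1} ≠ y_t) ≤ 1/(sqrt(2π)·η)`. -/
theorem ftpl_constant_rate_switching_probability
    {Ω : Type*} [MeasureSpace Ω] [IsProbabilityMeasure (ℙ : Measure Ω)]
    (N C : ℕ) (hC : 0 < C) (hCN : C < N)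
    (f : ℕ → Fin N)
    (X : ℕ → Fin N → ℝ)
    (hX : ∀ t i, X t i = ∑ τ ∈ Finset.Ico 1 t, if f τ = i then (1 : ℝ) else 0)
    (γ : Fin N → Ω → ℝ)
    (hγindep : iIndepFun γ ℙ)
    (hγgauss : ∀ i, Measure.map (γ i) ℙ = gaussianReal 0 1)
    (η : ℝ) (hη : 0 < η)
    (S : ℕ → Ω → Finset (Fin N))
    (hScard : ∀ t ω, (S t ω).card = C)
    (hStop : ∀ t ω, ∀ i ∈ S t ω, ∀ j ∉ S t ω,
      X t j + η * γ j ω ≤ X t i + η * γ i ω)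
    (t : ℕ) (ht : 1 ≤ t) :
    ℙ {ω | S (t + 1) ω ≠ S t ω} ≤ ENNReal.ofReal (1 / (Real.sqrt (2 * Real.pi) * η)) :=
  ftpl_constant_rate_switching_probability_general N C hC f X hX γ hγindep hγgauss η hη S hScard
    hStop t ht
end

section
/- Under the anytime FTPL caching policy with learning rates η_t = α·sqrt(t) (α > 0), the fetch rate FR_t = (1/t)·Σ_{τ=2}^t ‖y_τ − y_{τ−1}‖_1 satisfies limsup_{t→∞} FR_t = 0 almost surely. -/
/-!
If file `i` enters the cache at time `t + 1` while `j` leaves it, the perturbed score gap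
`X t i - X t j + α √t (γ i - γ j)` changes sign between `t` and `t + 1`. It moves by at most
`1 + α |γ i - γ j|` per step, so at time `t` it is within that distance of a tie. The gaps `c`
within `M` of a tie at time `t` form an interval of length `O(M / √t)`, so `∑ₜ 1[near tie at t] / t`
has finite integral in `c`. For a.e. `c` the series therefore converges, and the frequency of
near ties tends to `0`. Independence makes the law of `γ i - γ j` absolutely continuous, so this
holds almost surely. Finally, each step fetches at most twice as many files as there are swapping
pairs.
-/

open MeasureTheory ProbabilityTheory Real Filter
open scoped ENNReal Topology

lemma Finset.card_symmDiff_le_two_mul_card_sdiff_product {α : Type*} [DecidableEq α]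
    {s t : Finset α} (h : s.card = t.card) :
    (symmDiff s t).card ≤ 2 * ((s \ t) ×ˢ (t \ s)).card := by
  have hsdiff : (s \ t).card = (t \ s).card := Finset.card_sdiff_comm h
  rw [symmDiff_def, Finset.sup_eq_union, Finset.card_union_of_disjoint disjoint_sdiff_sdiff,
    Finset.card_product, ← hsdiff]
  rcases Nat.eq_zero_or_pos (s \ t).card with h0 | hpos
  · simp [h0]
  · nlinarith

lemma tendsto_sum_range_div_atTop_zero {a : ℕ → ℝ} (ha : ∀ t, 0 ≤ a t)
    (hsum : Summable fun t : ℕ => a t / (t + 1)) :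
    Tendsto (fun T : ℕ => (∑ t ∈ Finset.range T, a t) / T) atTop (𝓝 0) := by
  have hterm (t : ℕ) :
      Tendsto (fun T : ℕ => if t < T then a t / T else 0) atTop (𝓝 0) := by
    refine (tendsto_const_div_atTop_nhds_zero_nat (a t)).congr' ?_
    filter_upwards [eventually_gt_atTop t] with T hT
    simp [hT]
  have hbound (T t : ℕ) : ‖if t < T then a t / T else 0‖ ≤ a t / (t + 1) := by
    split_ifs with ht
    · have hT : (t : ℝ) + 1 ≤ T := by exact_mod_cast ht
      rw [Real.norm_of_nonneg (by positivity [ha t])]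
      exact div_le_div_of_nonneg_left (ha t) (by positivity) hT
    · simpa using div_nonneg (ha t) (by positivity)
  have hsum_eq (T : ℕ) :
      ∑' t, (if t < T then a t / T else 0) = (∑ t ∈ Finset.range T, a t) / T := by
    rw [tsum_eq_sum (s := Finset.range T) (fun t ht => by simp_all), Finset.sum_div]
    exact Finset.sum_congr rfl fun t ht => if_pos (Finset.mem_range.1 ht)
  simpa only [hsum_eq, tsum_zero] using
    tendsto_tsum_of_dominated_convergence hsum hterm (Eventually.of_forall hbound)

lemma ae_tendsto_sum_range_indicator_div_atTop_zero {α : Type*} [MeasurableSpace α]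
    {μ : Measure α} {E : ℕ → Set α} (hE : ∀ t, MeasurableSet (E t))
    (hfin : ∑' t : ℕ, μ (E t) / (t + 1) ≠ ∞) :
    ∀ᵐ x ∂μ, Tendsto (fun T : ℕ => (∑ t ∈ Finset.range T, (E t).indicator (1 : α → ℝ) x) / T)
      atTop (𝓝 0) := by
  set F : ℕ → α → ℝ≥0∞ := fun t x => (E t).indicator 1 x / (t + 1)
  have hF (t : ℕ) : Measurable (F t) := (measurable_one.indicator (hE t)).div_const _
  have hint : ∫⁻ x, ∑' t, F t x ∂μ = ∑' t : ℕ, μ (E t) / (t + 1) := by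
    rw [lintegral_tsum fun t => (hF t).aemeasurable]
    congr 1 with t
    simp only [F, div_eq_mul_inv, lintegral_mul_const _ (measurable_one.indicator (hE t)),
      lintegral_indicator_one (hE t)]
  filter_upwards [ae_lt_top (Measurable.tsum hF) (hint ▸ hfin)] with x hx
  refine tendsto_sum_range_div_atTop_zero
    (fun t => Set.indicator_nonneg (fun _ _ => zero_le_one) x) ?_
  refine (ENNReal.summable_toReal hx.ne).congr fun t => ?_
  by_cases hxt : x ∈ E t <;> simp [F, hxt, ENNReal.toReal_add]

lemma ProbabilityTheory.IndepFun.ae_sub_of_ae_volume {Ω : Type*} [MeasurableSpace Ω]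
    {P : Measure Ω} [IsFiniteMeasure P] {X Y : Ω → ℝ} (hXY : IndepFun X Y P)
    (hX : AEMeasurable X P) (hY : AEMeasurable Y P) (hac : P.map X ≪ volume)
    {p : ℝ → Prop} (hp : ∀ᵐ c, p c) :
    ∀ᵐ ω ∂P, p (X ω - Y ω) := by
  have hind : IndepFun (-Y) X P := hXY.symm.comp measurable_neg measurable_id
  have hlaw : P.map (-Y + X) ≪ volume := by
    rw [hind.map_add_eq_map_conv_map₀ hY.neg hX]
    exact Measure.conv_absolutelyContinuous hac
  simpa [sub_eq_neg_add] using ae_of_ae_map (hY.neg.add hX) (hlaw.ae_le hp)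

lemma Real.volume_setOf_abs_add_mul_le (a : ℝ) {b : ℝ} (hb : 0 < b) (M : ℝ) :
    volume {c : ℝ | |a + b * c| ≤ M} = ENNReal.ofReal (2 * M / b) := by
  have hIcc : {c : ℝ | |a + b * c| ≤ M} = Set.Icc ((-M - a) / b) ((M - a) / b) := by
    ext c
    simp only [Set.mem_ofPred_eq, Set.mem_Icc, abs_le, div_le_iff₀ hb, le_div_iff₀ hb]
    constructor <;> rintro ⟨h₁, h₂⟩ <;> constructor <;> linarith
  rw [hIcc, Real.volume_Icc]
  congr 1
  field_simp
  ring

def nearTies (A : ℕ → ℝ) (β M : ℝ) (t : ℕ) : Set ℝ :=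
  {c | |A t + β * √(t : ℝ) * c| ≤ M}

lemma measurableSet_nearTies (A : ℕ → ℝ) (β M : ℝ) (t : ℕ) :
    MeasurableSet (nearTies A β M t) :=
  measurableSet_le (by fun_prop) measurable_const

-- The shift `s + 1` is needed: `nearTies A β M 0` is `∅` or all of `ℝ`.
lemma tsum_volume_nearTies_succ_div_ne_top (A : ℕ → ℝ) {β : ℝ} (hβ : 0 < β) {M : ℝ}
    (hM : 0 ≤ M) :
    ∑' s : ℕ, volume (nearTies A β M (s + 1)) / (s + 1) ≠ ∞ := by
  have hterm (s : ℕ) : volume (nearTies A β M (s + 1)) / (s + 1) =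
      ENNReal.ofReal (2 * M / β * (1 / |(s : ℝ) + 1| ^ (3 / 2 : ℝ))) := by
    have hs : (0 : ℝ) < s + 1 := by positivity
    have hpow : |(s : ℝ) + 1| ^ (3 / 2 : ℝ) = √((s : ℝ) + 1) * (s + 1) := by
      rw [abs_of_pos hs, show (3 / 2 : ℝ) = 1 / 2 + 1 by norm_num, Real.rpow_add hs,
        Real.rpow_one, Real.sqrt_eq_rpow]
    rw [nearTies, Real.volume_setOf_abs_add_mul_le _ (by positivity), hpow,
      ← ENNReal.ofReal_natCast, ← ENNReal.ofReal_one,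
      ← ENNReal.ofReal_add (by positivity) zero_le_one, ← ENNReal.ofReal_div_of_pos hs]
    congr 1
    push_cast
    field_simp
  have hsum := ((Real.summable_one_div_nat_add_rpow 1 (3 / 2)).2 (by norm_num)).mul_left (2 * M / β)
  simp only [hterm]
  rw [← ENNReal.ofReal_tsum_of_nonneg (fun s => by positivity) hsum]
  exact ENNReal.ofReal_ne_top

lemma ae_tendsto_nearTies_density (A : ℕ → ℝ) {β : ℝ} (hβ : 0 < β) :
    ∀ᵐ c, ∀ M : ℕ, Tendsto (fun T : ℕ =>
      (∑ s ∈ Finset.range T, (nearTies A β M (s + 1)).indicator (1 : ℝ → ℝ) c) / T)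
      atTop (𝓝 0) :=
  ae_all_iff.2 fun M => ae_tendsto_sum_range_indicator_div_atTop_zero
    (fun s => measurableSet_nearTies A β M (s + 1))
    (tsum_volume_nearTies_succ_div_ne_top A hβ M.cast_nonneg)

lemma nearTies_mono {A : ℕ → ℝ} {β M M' : ℝ} (h : M ≤ M') {t : ℕ} :
    nearTies A β M t ⊆ nearTies A β M' t :=
  fun _ hc => le_trans hc h

lemma abs_add_mul_sqrt_le_of_sign_change {a a' β c : ℝ} {t : ℕ} (hβ : 0 ≤ β)
    (ha : a' ≤ a + 1) (h₀ : a + β * √(t : ℝ) * c ≤ 0)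
    (h₁ : 0 ≤ a' + β * √((t + 1 : ℕ) : ℝ) * c) :
    |a + β * √(t : ℝ) * c| ≤ 1 + β * |c| := by
  have hsqrt : √((t + 1 : ℕ) : ℝ) - √(t : ℝ) ≤ 1 := by
    have hsq := Real.sq_sqrt (Nat.cast_nonneg (α := ℝ) t)
    have : √((t + 1 : ℕ) : ℝ) ≤ √(t : ℝ) + 1 :=
      (Real.sqrt_le_left (by positivity)).2 (by push_cast; nlinarith [Real.sqrt_nonneg (t : ℝ)])
    linarith
  have hmono : √(t : ℝ) ≤ √((t + 1 : ℕ) : ℝ) := Real.sqrt_le_sqrt (by push_cast; linarith)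
  have hdrift : (√((t + 1 : ℕ) : ℝ) - √(t : ℝ)) * c ≤ |c| :=
    calc (√((t + 1 : ℕ) : ℝ) - √(t : ℝ)) * c
        ≤ (√((t + 1 : ℕ) : ℝ) - √(t : ℝ)) * |c| :=
          mul_le_mul_of_nonneg_left (le_abs_self c) (by linarith)
      _ ≤ |c| := mul_le_of_le_one_left (abs_nonneg c) hsqrt
  rw [abs_le]
  constructor <;> nlinarith [mul_le_mul_of_nonneg_left hdrift hβ, abs_nonneg c]

lemma sum_Icc_two_boole_le_sum_range_indicator {α : Type*} {P : ℕ → Prop} [DecidablePred P]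
    {E : ℕ → Set α} {x : α} (h : ∀ s, P (s + 2) → x ∈ E (s + 1)) (T : ℕ) :
    ∑ τ ∈ Finset.Icc 2 T, (if P τ then 1 else 0 : ℝ) ≤
      ∑ s ∈ Finset.range T, (E (s + 1)).indicator 1 x := by
  rw [← Finset.Ico_add_one_right_eq_Icc, Finset.sum_Ico_eq_sum_range]
  refine (Finset.sum_le_sum fun s _ => ?_).trans <|
    Finset.sum_le_sum_of_subset_of_nonneg (Finset.range_subset_range.2 (by omega))
      fun s _ _ => Set.indicator_nonneg (fun _ _ => zero_le_one) x
  split_ifs with hP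
  · rw [Set.indicator_of_mem (h s (by rwa [add_comm]))]
    rfl
  · exact Set.indicator_nonneg (fun _ _ => zero_le_one) x

section CumulativeCounts

variable {ι : Type*} [DecidableEq ι] {f : ℕ → ι} {X : ℕ → ι → ℝ}

lemma sub_succ_le_sub_add_one
    (hX : ∀ t i, X t i = ∑ τ ∈ Finset.Ico 1 t, if f τ = i then (1 : ℝ) else 0)
    {t : ℕ} (ht : 1 ≤ t) (i j : ι) :
    X (t + 1) i - X (t + 1) j ≤ X t i - X t j + 1 := by
  simp only [hX, Finset.sum_Ico_succ_top ht]
  split_ifs <;> linarith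

lemma ftpl_swap_mem_nearTies
    (hX : ∀ t i, X t i = ∑ τ ∈ Finset.Ico 1 t, if f τ = i then (1 : ℝ) else 0)
    {α : ℝ} (hα : 0 ≤ α) {g : ι → ℝ} {S : ℕ → Finset ι}
    (hStop : ∀ t, ∀ i ∈ S t, ∀ j ∉ S t,
      X t j + α * Real.sqrt t * g j ≤ X t i + α * Real.sqrt t * g i)
    {t : ℕ} (ht : 1 ≤ t) {i j : ι} (hi : i ∈ S (t + 1) \ S t) (hj : j ∈ S t \ S (t + 1)) :
    g i - g j ∈ nearTies (fun s => X s i - X s j) α (1 + α * |g i - g j|) t := by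
  rw [Finset.mem_sdiff] at hi hj
  have h₀ := hStop t j hj.1 i hi.2
  have h₁ := hStop (t + 1) i hi.1 j hj.2
  exact abs_add_mul_sqrt_le_of_sign_change hα (sub_succ_le_sub_add_one hX ht i j)
    (by linarith) (by linarith)

theorem tendsto_fetchRate_zero_of_nearTies_density [Fintype ι]
    (hX : ∀ t i, X t i = ∑ τ ∈ Finset.Ico 1 t, if f τ = i then (1 : ℝ) else 0)
    {α : ℝ} (hα : 0 ≤ α) {g : ι → ℝ} {S : ℕ → Finset ι} {C : ℕ} (hS : ∀ t, (S t).card = C)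
    (hStop : ∀ t, ∀ i ∈ S t, ∀ j ∉ S t,
      X t j + α * Real.sqrt t * g j ≤ X t i + α * Real.sqrt t * g i)
    (hdens : ∀ i j, i ≠ j → ∀ M : ℕ, Tendsto (fun T : ℕ =>
      (∑ s ∈ Finset.range T,
        (nearTies (fun t => X t i - X t j) α M (s + 1)).indicator (1 : ℝ → ℝ) (g i - g j)) / T)
      atTop (𝓝 0)) :
    Tendsto (fun T : ℕ =>
      1 / (T : ℝ) * ∑ τ ∈ Finset.Icc 2 T, ((symmDiff (S τ) (S (τ - 1))).card : ℝ))
      atTop (𝓝 0) := by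
  set swaps : ℕ → Finset (ι × ι) := fun τ => (S τ \ S (τ - 1)) ×ˢ (S (τ - 1) \ S τ)
  have hswaps (p : ι × ι) : Tendsto (fun T : ℕ =>
      (∑ τ ∈ Finset.Icc 2 T, (if p ∈ swaps τ then 1 else 0 : ℝ)) / T) atTop (𝓝 0) := by
    obtain ⟨i, j⟩ := p
    by_cases hij : i = j
    · subst hij
      have hnot (τ : ℕ) : (i, i) ∉ swaps τ := by
        simp only [swaps, Finset.mem_product, Finset.mem_sdiff]
        tauto
      simpa only [hnot, if_false, Finset.sum_const_zero, zero_div] using tendsto_const_nhds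
    refine squeeze_zero (fun T => by positivity)
      (fun T => div_le_div_of_nonneg_right ?_ T.cast_nonneg) (hdens i j hij ⌈1 + α * |g i - g j|⌉₊)
    refine sum_Icc_two_boole_le_sum_range_indicator (fun s hs => ?_) T
    simp only [swaps, Finset.mem_product] at hs
    exact nearTies_mono (Nat.le_ceil _) (ftpl_swap_mem_nearTies hX hα hStop (by omega) hs.1 hs.2)
  have hbound (T : ℕ) :
      1 / (T : ℝ) * ∑ τ ∈ Finset.Icc 2 T, ((symmDiff (S τ) (S (τ - 1))).card : ℝ) ≤
        2 * ∑ p : ι × ι, (∑ τ ∈ Finset.Icc 2 T, (if p ∈ swaps τ then 1 else 0 : ℝ)) / T := by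
    have hcount : ∑ τ ∈ Finset.Icc 2 T, ((symmDiff (S τ) (S (τ - 1))).card : ℝ) ≤
        2 * ∑ p : ι × ι, ∑ τ ∈ Finset.Icc 2 T, (if p ∈ swaps τ then 1 else 0 : ℝ) := by
      rw [Finset.sum_comm, Finset.mul_sum]
      refine Finset.sum_le_sum fun τ _ => ?_
      rw [Finset.sum_boole, Finset.filter_mem_eq_inter, Finset.univ_inter]
      exact_mod_cast Finset.card_symmDiff_le_two_mul_card_sdiff_product ((hS τ).trans (hS _).symm)
    calc _ ≤ 1 / (T : ℝ) * (2 * ∑ p : ι × ι,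
            ∑ τ ∈ Finset.Icc 2 T, (if p ∈ swaps τ then 1 else 0 : ℝ)) := by gcongr
      _ = _ := by rw [mul_left_comm, Finset.mul_sum]; simp only [one_div_mul_eq_div]
  have hlim := (tendsto_finsetSum Finset.univ fun p _ => hswaps p).const_mul 2
  rw [Finset.sum_const_zero, mul_zero] at hlim
  have hnonneg (T : ℕ) :
      0 ≤ 1 / (T : ℝ) * ∑ τ ∈ Finset.Icc 2 T, ((symmDiff (S τ) (S (τ - 1))).card : ℝ) :=
    mul_nonneg (by positivity) (Finset.sum_nonneg fun _ _ => Nat.cast_nonneg _)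
  exact squeeze_zero hnonneg hbound hlim

end CumulativeCounts

theorem ftpl_anytime_fetch_rate_vanishes_general
    {Ω : Type*} [MeasureSpace Ω] [IsProbabilityMeasure (ℙ : Measure Ω)]
    (N C : ℕ)
    (f : ℕ → Fin N)
    (X : ℕ → Fin N → ℝ)
    (hX : ∀ t i, X t i = ∑ τ ∈ Finset.Ico 1 t, if f τ = i then (1 : ℝ) else 0)
    (γ : Fin N → Ω → ℝ)
    (hγindep : iIndepFun γ ℙ)
    (hγgauss : ∀ i, Measure.map (γ i) ℙ = gaussianReal 0 1)
    (α : ℝ) (hα : 0 < α)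
    (S : ℕ → Ω → Finset (Fin N))
    (hScard : ∀ t ω, (S t ω).card = C)
    (hStop : ∀ t ω, ∀ i ∈ S t ω, ∀ j ∉ S t ω,
      X t j + α * Real.sqrt t * γ j ω ≤ X t i + α * Real.sqrt t * γ i ω) :
    ∀ᵐ ω ∂(ℙ : Measure Ω),
      Filter.limsup
        (fun t : ℕ =>
          (1 / (t : ℝ)) * ∑ τ ∈ Finset.Icc 2 t, ((symmDiff (S τ ω) (S (τ - 1) ω)).card : ℝ))
        Filter.atTop = 0 := by
  have hmeas (i : Fin N) : AEMeasurable (γ i) ℙ :=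
    aemeasurable_of_map_neZero (by rw [hγgauss i]; infer_instance)
  have hac (i : Fin N) : (ℙ : Measure Ω).map (γ i) ≪ volume :=
    hγgauss i ▸ gaussianReal_absolutelyContinuous 0 one_ne_zero
  have hgood : ∀ᵐ ω ∂(ℙ : Measure Ω), ∀ i j, i ≠ j → ∀ M : ℕ, Tendsto (fun T : ℕ =>
      (∑ s ∈ Finset.range T, (nearTies (fun t => X t i - X t j) α M (s + 1)).indicator
        (1 : ℝ → ℝ) (γ i ω - γ j ω)) / T) atTop (𝓝 0) := by
    refine ae_all_iff.2 fun i => ae_all_iff.2 fun j => ?_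
    by_cases hij : i = j
    · exact ae_of_all _ fun _ h => absurd hij h
    · exact ((hγindep.indepFun hij).ae_sub_of_ae_volume (hmeas i) (hmeas j) (hac i)
        (ae_tendsto_nearTies_density _ hα)).mono fun _ h _ => h
  filter_upwards [hgood] with ω hω
  exact (tendsto_fetchRate_zero_of_nearTies_density hX hα.le (hScard · ω) (hStop · ω) hω).limsup_eq

/-- Under the anytime FTPL caching policy with learning rates
`η_t = α·sqrt t` (`α > 0`), the fetch rate `FR_t = (1/t)·Σ_{τ=2}^t ‖y_τ − y_{τ−1}‖_1`
satisfies `limsup_{t→∞} FR_t = 0` almost surely. -/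
theorem ftpl_anytime_fetch_rate_vanishes
    {Ω : Type*} [MeasureSpace Ω] [IsProbabilityMeasure (ℙ : Measure Ω)]
    (N C : ℕ) (hC : 0 < C) (hCN : C < N) (hNC : C ≤ N - 2)
    (f : ℕ → Fin N)
    (X : ℕ → Fin N → ℝ)
    (hX : ∀ t i, X t i = ∑ τ ∈ Finset.Ico 1 t, if f τ = i then (1 : ℝ) else 0)
    (γ : Fin N → Ω → ℝ)
    (hγindep : iIndepFun γ ℙ)
    (hγgauss : ∀ i, Measure.map (γ i) ℙ = gaussianReal 0 1)
    (α : ℝ) (hα : 0 < α)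
    (S : ℕ → Ω → Finset (Fin N))
    (hScard : ∀ t ω, (S t ω).card = C)
    (hStop : ∀ t ω, ∀ i ∈ S t ω, ∀ j ∉ S t ω,
      X t j + α * Real.sqrt t * γ j ω ≤ X t i + α * Real.sqrt t * γ i ω) :
    ∀ᵐ ω ∂(ℙ : Measure Ω),
      Filter.limsup
        (fun t : ℕ =>
          (1 / (t : ℝ)) * ∑ τ ∈ Finset.Icc 2 t, ((symmDiff (S τ ω) (S (τ - 1) ω)).card : ℝ))
        Filter.atTop = 0 :=
  ftpl_anytime_fetch_rate_vanishes_general N C f X hX γ hγindep hγgauss α hα S hScard hStop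
end

section
/- Under the anytime FTPL caching policy with learning rates η_t = α·sqrt(t) (α > 0), the currently requested file is never evicted: for every slot t, P(f_t ∈ S_t and f_t ∉ S_{t+1}) = 0. -/
open MeasureTheory ProbabilityTheory Real

/-!
The event is empty for every realisation of the perturbation. Suppose the requested file
`i = f t` is cached at slot `t` but not at `t + 1`; since both caches have `C` elements, some
file `j` enters the cache at `t + 1`. With `D = X t i - X t j ≤ t` and `c = α (γ j - γ i)`, the
two caching rules give `c √t ≤ D` and `D + 1 ≤ c √(t+1)` (the count of `i` grows by one, that
of `j` does not). But `√(t+1) - √t < 1 / (2 √t)` and `c ≤ D / √t ≤ √t`, so the perturbation can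
gain at most `1/2` on the count from one slot to the next: a contradiction.
-/

def requestCount {α : Type*} [DecidableEq α] (f : ℕ → α) (t : ℕ) (i : α) : ℝ :=
  ∑ τ ∈ Finset.Ico 1 t, if f τ = i then (1 : ℝ) else 0

section requestCount

variable {α : Type*} [DecidableEq α] (f : ℕ → α)

lemma requestCount_nonneg (t : ℕ) (i : α) : 0 ≤ requestCount f t i :=
  Finset.sum_nonneg fun _ _ => by split <;> norm_num

lemma requestCount_le (t : ℕ) (i : α) : requestCount f t i ≤ t := by
  rw [requestCount, Finset.sum_boole]
  calc ((Finset.Ico 1 t).filter (f · = i)).card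
      ≤ ((Finset.Ico 1 t).card : ℝ) := by exact_mod_cast Finset.card_filter_le _ _
    _ = ((t - 1 : ℕ) : ℝ) := by rw [Nat.card_Ico]
    _ ≤ t := by exact_mod_cast Nat.sub_le t 1

lemma requestCount_succ {t : ℕ} (ht : 1 ≤ t) (i : α) :
    requestCount f (t + 1) i = requestCount f t i + if f t = i then 1 else 0 := by
  rw [requestCount, requestCount, Finset.sum_Ico_succ_top ht]

end requestCount

lemma Finset.exists_mem_notMem_of_card_le_of_mem_notMem {α : Type*} {s t : Finset α} {a : α}
    (hcard : s.card ≤ t.card) (has : a ∈ s) (hat : a ∉ t) : ∃ b ∈ t, b ∉ s := by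
  by_contra! hts
  exact hat (Finset.eq_of_subset_of_card_le hts hcard ▸ has)

lemma mul_sqrt_add_one_lt_add_one {t c D : ℝ} (ht : 0 < t) (hD : D ≤ t)
    (h : c * √t ≤ D) : c * √(t + 1) < D + 1 := by
  have hs : 0 < √t := Real.sqrt_pos.2 ht
  have hss : √t < √(t + 1) := Real.sqrt_lt_sqrt ht.le (lt_add_one t)
  rcases le_or_gt c 0 with hc | hc
  · nlinarith
  have hsq : √(t + 1) ^ 2 = √t ^ 2 + 1 := by
    rw [Real.sq_sqrt ht.le, Real.sq_sqrt (by linarith)]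
  -- `(√(t+1) - √t) (√(t+1) + √t) = 1` and `c √t ≤ t = √t ^ 2`
  have hct : c ≤ √t := by nlinarith [Real.sq_sqrt ht.le]
  nlinarith [mul_pos hc (sub_pos.2 hss)]

theorem ftpl_anytime_requested_file_never_evicted_general
    {Ω : Type*} [MeasureSpace Ω]
    (N C : ℕ)
    (f : ℕ → Fin N)
    (X : ℕ → Fin N → ℝ)
    (hX : ∀ t i, X t i = ∑ τ ∈ Finset.Ico 1 t, if f τ = i then (1 : ℝ) else 0)
    (γ : Fin N → Ω → ℝ)
    (α : ℝ)
    (S : ℕ → Ω → Finset (Fin N))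
    (hScard : ∀ t ω, (S t ω).card = C)
    (hStop : ∀ t ω, ∀ i ∈ S t ω, ∀ j ∉ S t ω,
      X t j + α * Real.sqrt t * γ j ω ≤ X t i + α * Real.sqrt t * γ i ω)
    (t : ℕ) (ht : 1 ≤ t) :
    ℙ {ω | f t ∈ S t ω ∧ f t ∉ S (t + 1) ω} = 0 := by
  obtain rfl : X = requestCount f := funext fun t => funext (hX t)
  suffices h : {ω | f t ∈ S t ω ∧ f t ∉ S (t + 1) ω} = ∅ by rw [h, measure_empty]
  refine Set.eq_empty_of_forall_notMem fun ω ⟨hin, hout⟩ => ?_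
  obtain ⟨j, hj_in, hj_out⟩ := Finset.exists_mem_notMem_of_card_le_of_mem_notMem
    (by rw [hScard, hScard]) hin hout
  have hj : f t ≠ j := fun h => hout (h ▸ hj_in)
  have h_before := hStop t ω (f t) hin j hj_out
  have h_after := hStop (t + 1) ω j hj_in (f t) hout
  rw [requestCount_succ f ht, requestCount_succ f ht, if_pos rfl, if_neg hj] at h_after
  push_cast at h_after
  have key := mul_sqrt_add_one_lt_add_one (c := α * (γ j ω - γ (f t) ω))
    (D := requestCount f t (f t) - requestCount f t j) (Nat.cast_pos.2 ht)
    (by linarith [requestCount_le f t (f t), requestCount_nonneg f t j]) (by linarith)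
  linarith

/-- Under the anytime FTPL caching policy with learning rates
`η_t = α·sqrt t` (`α > 0`), the currently requested file is never evicted:
for every slot `t`, `P(f_t ∈ S_t and f_t ∉ S_{t+1}) = 0`. -/
theorem ftpl_anytime_requested_file_never_evicted
    {Ω : Type*} [MeasureSpace Ω] [IsProbabilityMeasure (ℙ : Measure Ω)]
    (N C : ℕ) (hC : 0 < C) (hCN : C < N)
    (f : ℕ → Fin N)
    (X : ℕ → Fin N → ℝ)
    (hX : ∀ t i, X t i = ∑ τ ∈ Finset.Ico 1 t, if f τ = i then (1 : ℝ) else 0)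
    (γ : Fin N → Ω → ℝ)
    (hγindep : iIndepFun γ ℙ)
    (hγgauss : ∀ i, Measure.map (γ i) ℙ = gaussianReal 0 1)
    (α : ℝ) (hα : 0 < α)
    (S : ℕ → Ω → Finset (Fin N))
    (hScard : ∀ t ω, (S t ω).card = C)
    (hStop : ∀ t ω, ∀ i ∈ S t ω, ∀ j ∉ S t ω,
      X t j + α * Real.sqrt t * γ j ω ≤ X t i + α * Real.sqrt t * γ i ω)
    (t : ℕ) (ht : 1 ≤ t) :
    ℙ {ω | f t ∈ S t ω ∧ f t ∉ S (t + 1) ω} = 0 :=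
  ftpl_anytime_requested_file_never_evicted_general N C f X hX γ α S hScard hStop t ht
end

section
/- For all real numbers a, b, c with 0 < a < b, the Gaussian-type integral satisfies ∫_a^b exp(−(γ + c)²/2) dγ ≤ (b² − a²)/(sqrt(e)·a·b) + (b/a − 1)·|c|. -/
/-!
Write `x = γ + c`. Since `x e^{-x²/2}` peaks at `x = 1`, we get `x e^{-x²/2} ≤ e^{-1/2}`, and with
`γ ≤ x + |c|` and `e^{-x²/2} ≤ 1` this gives `γ e^{-(γ+c)²/2} ≤ e^{-1/2} + |c|`. On `[a, b]` the
integrand is therefore at most `(e^{-1/2} + |c|) / a`, so the integral is at most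
`(b - a)(e^{-1/2} + |c|) / a`, which is dominated by the right-hand side because `(a + b) / b ≥ 1`.
-/

open Real

lemma mul_exp_neg_sq_div_two_le (x : ℝ) : x * exp (-x ^ 2 / 2) ≤ exp (-1 / 2) := by
  have hx : x ≤ exp ((x ^ 2 - 1) / 2) := by
    nlinarith [add_one_le_exp ((x ^ 2 - 1) / 2), sq_nonneg (x - 1)]
  calc x * exp (-x ^ 2 / 2) ≤ exp ((x ^ 2 - 1) / 2) * exp (-x ^ 2 / 2) :=
        mul_le_mul_of_nonneg_right hx (exp_nonneg _)
    _ = exp (-1 / 2) := by rw [← exp_add]; ring_nf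

lemma mul_exp_neg_sq_add_div_two_le (γ c : ℝ) :
    γ * exp (-(γ + c) ^ 2 / 2) ≤ exp (-1 / 2) + |c| := by
  have hpeak := mul_exp_neg_sq_div_two_le (γ + c)
  have hle_one : exp (-(γ + c) ^ 2 / 2) ≤ 1 := exp_le_one_iff.mpr (by nlinarith [sq_nonneg (γ + c)])
  have hpos := exp_pos (-(γ + c) ^ 2 / 2)
  nlinarith [neg_abs_le c, abs_nonneg c]

lemma exp_neg_sq_add_div_two_le_of_le {a γ : ℝ} (c : ℝ) (ha : 0 < a) (hγ : a ≤ γ) :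
    exp (-(γ + c) ^ 2 / 2) ≤ (exp (-1 / 2) + |c|) / a := by
  rw [le_div_iff₀ ha, mul_comm]
  calc a * exp (-(γ + c) ^ 2 / 2) ≤ γ * exp (-(γ + c) ^ 2 / 2) :=
        mul_le_mul_of_nonneg_right hγ (exp_nonneg _)
    _ ≤ exp (-1 / 2) + |c| := mul_exp_neg_sq_add_div_two_le γ c

lemma sub_div_le_sq_sub_sq_div {a b s : ℝ} (ha : 0 < a) (hab : a ≤ b) (hs : 0 < s) :
    (b - a) / (s * a) ≤ (b ^ 2 - a ^ 2) / (s * a * b) := by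
  have hb : 0 < b := ha.trans_le hab
  rw [div_le_div_iff₀ (by positivity) (by positivity)]
  nlinarith [mul_nonneg (mul_nonneg hs.le (sq_nonneg a)) (sub_nonneg.mpr hab)]

/-- For all real numbers `a, b, c` with `0 < a < b`,
`∫_a^b exp(−(γ + c)²/2) dγ ≤ (b² − a²)/(sqrt e · a · b) + (b/a − 1)·|c|`. -/
theorem gaussian_type_integral_bound
    (a b c : ℝ) (ha : 0 < a) (hab : a < b) :
    (∫ γ in a..b, Real.exp (-(γ + c) ^ 2 / 2))
      ≤ (b ^ 2 - a ^ 2) / (Real.sqrt (Real.exp 1) * a * b) + (b / a - 1) * |c| := by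
  have hexp : exp (-1 / 2) = (√(exp 1))⁻¹ := by
    rw [← exp_half, ← exp_neg]; norm_num
  calc (∫ γ in a..b, exp (-(γ + c) ^ 2 / 2))
      ≤ ∫ _ in a..b, (exp (-1 / 2) + |c|) / a :=
        intervalIntegral.integral_mono_on hab.le
          ((by fun_prop : Continuous _).intervalIntegrable _ _)
          intervalIntegrable_const
          fun γ hγ ↦ exp_neg_sq_add_div_two_le_of_le c ha hγ.1
    _ = (b - a) / (√(exp 1) * a) + (b / a - 1) * |c| := by
        rw [intervalIntegral.integral_const, smul_eq_mul, hexp]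
        field_simp
    _ ≤ _ := by
        grw [sub_div_le_sq_sub_sq_div ha hab.le (by positivity)]
end

section
/- Let Y be a finite nonempty subset of ℝ^N, η > 0, and define Φ(x) = E_γ[max_{y∈Y} ⟨y, x + η·γ⟩] for γ an N-dimensional standard Gaussian vector. If at the point x₀ ∈ ℝ^N the maximizer y*(γ) := argmax_{y∈Y} ⟨y, x₀ + η·γ⟩ is unique for almost every γ, then Φ is differentiable at x₀ and ∇Φ(x₀) = E_γ[y*(γ)]. -/
open MeasureTheory ProbabilityTheory Filter Topology
open scoped RealInnerProductSpace NNReal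

/-! For almost every `ω` the maximiser `ystar ω` is strict, so near `x₀` the integrand
`x ↦ max_{y ∈ Y} ⟪y, x + η • γ ω⟫` coincides with the affine map `x ↦ ⟪ystar ω, x + η • γ ω⟫`
and has gradient `ystar ω`. The integrand is Lipschitz in `x` with the constant `max_{y ∈ Y} ‖y‖`,
independent of `ω`, and integrable because Gaussian coordinates are; hence the derivative passes
under the integral sign by dominated convergence. -/

theorem HasFDerivAt.finset_sup'_of_lt {E ι : Type*} [NormedAddCommGroup E] [NormedSpace ℝ E]
    {s : Finset ι} (hs : s.Nonempty) {f : ι → E → ℝ} {f' : StrongDual ℝ E} {x : E} {i : ι}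
    (hi : i ∈ s) (hf : HasFDerivAt (f i) f' x) (hcont : ∀ j ∈ s, ContinuousAt (f j) x)
    (hlt : ∀ j ∈ s, j ≠ i → f j x < f i x) :
    HasFDerivAt (fun z => s.sup' hs fun j => f j z) f' x := by
  have hlt_near : ∀ᶠ z in 𝓝 x, ∀ j ∈ s, j ≠ i → f j z < f i z := by
    refine (eventually_all_finset s).2 fun j hj => ?_
    by_cases hji : j = i
    · exact .of_forall fun _ h => absurd hji h
    · exact ((hcont j hj).eventually_lt hf.continuousAt (hlt j hj hji)).mono fun _ h _ => h
  refine hf.congr_of_eventuallyEq (hlt_near.mono fun z hz => ?_)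
  refine le_antisymm (Finset.sup'_le _ _ fun j hj => ?_) (Finset.le_sup' (f · z) hi)
  rcases eq_or_ne j i with rfl | hji
  · exact le_rfl
  · exact (hz j hj hji).le

theorem LipschitzWith.finset_sup' {X ι : Type*} [PseudoEMetricSpace X] {s : Finset ι}
    (hs : s.Nonempty) {f : ι → X → ℝ} {K : ℝ≥0} (hf : ∀ i ∈ s, LipschitzWith K (f i)) :
    LipschitzWith K fun x => s.sup' hs fun i => f i x := by
  simp_rw [← Finset.sup'_apply]
  refine Finset.sup'_induction hs f (p := LipschitzWith K) (fun g hg h hh => ?_) hf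
  have := hg.max hh
  rwa [max_self] at this

theorem lipschitzWith_inner_add_const {E : Type*} [NormedAddCommGroup E] [InnerProductSpace ℝ E]
    (y p : E) : LipschitzWith ‖y‖₊ fun x => ⟪y, x + p⟫ :=
  LipschitzWith.of_dist_le_mul fun x x' => by
    simpa [dist_eq_norm, ← inner_sub_right] using abs_real_inner_le_norm y (x - x')

theorem hasGradientAt_inner_add_const {E : Type*} [NormedAddCommGroup E] [InnerProductSpace ℝ E]
    [CompleteSpace E] (y p x : E) : HasGradientAt (fun x => ⟪y, x + p⟫) y x := by
  simp_rw [inner_add_right]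
  exact (innerSL ℝ y).hasFDerivAt.add_const _

theorem Integrable.finset_sup' {Ω ι : Type*} [MeasurableSpace Ω] {μ : Measure Ω} {s : Finset ι}
    (hs : s.Nonempty) {f : ι → Ω → ℝ} (hf : ∀ i ∈ s, Integrable (f i) μ) :
    Integrable (fun ω => s.sup' hs fun i => f i ω) μ := by
  simp_rw [← Finset.sup'_apply]
  exact Finset.sup'_induction hs f (p := (Integrable · μ)) (fun g hg h hh => hg.sup hh) hf

theorem aestronglyMeasurable_of_ae_strict_argmax {Ω β : Type*} [MeasurableSpace Ω]
    {μ : Measure Ω} [TopologicalSpace β] [AddCommMonoid β] [ContinuousAdd β] {s : Finset β}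
    {score : β → Ω → ℝ} (hscore : ∀ y ∈ s, Measurable (score y)) {g : Ω → β}
    (hg : ∀ᵐ ω ∂μ, g ω ∈ s ∧ ∀ y ∈ s, y ≠ g ω → score y ω < score (g ω) ω) :
    AEStronglyMeasurable g μ := by
  classical
  let wins (y : β) : Set Ω := ⋂ z ∈ s.erase y, {ω | score z ω < score y ω}
  have hwins : ∀ y ∈ s, MeasurableSet (wins y) := fun y hy =>
    (s.erase y).measurableSet_biInter fun z hz =>
      measurableSet_lt (hscore z (Finset.mem_of_mem_erase hz)) (hscore y hy)
  refine ⟨∑ y ∈ s, (wins y).indicator (fun _ => y),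
    Finset.stronglyMeasurable_sum s fun y hy => stronglyMeasurable_const.indicator (hwins y hy), ?_⟩
  filter_upwards [hg] with ω ⟨hmem, hmax⟩
  have hwins_iff : ∀ y ∈ s, ω ∈ wins y ↔ g ω = y := by
    intro y hy
    simp only [wins, Set.mem_iInter, Set.mem_ofPred_eq, Finset.mem_erase]
    refine ⟨fun h => by_contra fun hne => ?_, fun h z ⟨hz, hzs⟩ => h ▸ hmax z hzs (h ▸ hz)⟩
    exact (hmax y hy (Ne.symm hne)).not_gt (h (g ω) ⟨hne, hmem⟩)
  simp only [Finset.sum_apply, Set.indicator_apply]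
  rw [Finset.sum_congr rfl fun y hy => if_congr (hwins_iff y hy) rfl rfl,
    Finset.sum_ite_eq s (g ω), if_pos hmem]

theorem integrable_of_map_eval_eq_gaussianReal {Ω ι : Type*} [MeasurableSpace Ω]
    {μ : Measure Ω} [Fintype ι] {X : Ω → EuclideanSpace ℝ ι} (hX : AEMeasurable X μ)
    {m : ι → ℝ} {v : ι → ℝ≥0} (hgauss : ∀ i, μ.map (fun ω => X ω i) = gaussianReal (m i) (v i)) :
    Integrable X μ := by
  refine integrable_piLp_iff.2 fun i => ?_
  have hid : Integrable id (μ.map fun ω => X ω i) := hgauss i ▸ IsGaussian.integrable_id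
  exact hid.comp_aemeasurable (by fun_prop)

theorem gradient_of_smoothed_potential_general
    {Ω : Type*} [MeasureSpace Ω] [IsProbabilityMeasure (ℙ : Measure Ω)]
    (N : ℕ)
    (γ : Ω → EuclideanSpace ℝ (Fin N))
    (hγmeas : Measurable γ)
    (hγgauss : ∀ i, Measure.map (fun ω => γ ω i) ℙ = gaussianReal 0 1)
    (Y : Finset (EuclideanSpace ℝ (Fin N))) (hY : Y.Nonempty)
    (η : ℝ)
    (x₀ : EuclideanSpace ℝ (Fin N))
    -- `ystar ω` is the a.e.-unique maximizer of `y ↦ ⟨y, x₀ + η·γ ω⟩` over `Y`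
    (ystar : Ω → EuclideanSpace ℝ (Fin N))
    (hstar : ∀ᵐ ω ∂(ℙ : Measure Ω), ystar ω ∈ Y ∧
      ∀ y ∈ Y, y ≠ ystar ω → ⟪y, x₀ + η • γ ω⟫ < ⟪ystar ω, x₀ + η • γ ω⟫) :
    HasGradientAt (fun x => ∫ ω, Y.sup' hY (fun y => ⟪y, x + η • γ ω⟫))
      (∫ ω, ystar ω) x₀ := by
  let K : ℝ≥0 := Y.sup' hY (‖·‖₊)
  have hγint : Integrable γ ℙ :=
    integrable_of_map_eval_eq_gaussianReal hγmeas.aemeasurable hγgauss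
  have hint (x) : Integrable (fun ω => Y.sup' hY fun y => ⟪y, x + η • γ ω⟫) ℙ :=
    Integrable.finset_sup' hY fun y _ =>
      ((integrable_const x).add (hγint.smul η)).const_inner y
  have hlip (ω) : LipschitzWith K fun x => Y.sup' hY fun y => ⟪y, x + η • γ ω⟫ :=
    LipschitzWith.finset_sup' hY fun y hy =>
      (lipschitzWith_inner_add_const y _).weaken (Finset.le_sup' (‖·‖₊) hy)
  have hdiff : ∀ᵐ ω ∂(ℙ : Measure Ω),
      HasGradientAt (fun x => Y.sup' hY fun y => ⟪y, x + η • γ ω⟫) (ystar ω) x₀ := by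
    filter_upwards [hstar] with ω ⟨hmem, hmax⟩
    exact HasFDerivAt.finset_sup'_of_lt hY hmem (hasGradientAt_inner_add_const _ _ _)
      (fun y _ => (hasGradientAt_inner_add_const y _ x₀).continuousAt) hmax
  have hmeas : AEStronglyMeasurable ystar ℙ :=
    aestronglyMeasurable_of_ae_strict_argmax (fun y _ => by fun_prop) hstar
  obtain ⟨-, hΦ⟩ := hasFDerivAt_integral_of_dominated_loc_of_lip (bound := fun _ => (K : ℝ))
    univ_mem (.of_forall fun x => (hint x).aestronglyMeasurable) (hint x₀)
    ((InnerProductSpace.toDual ℝ _).continuous.comp_aestronglyMeasurable hmeas)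
    (.of_forall fun ω => by simpa using hlip ω) (integrable_const _) hdiff
  have hcomm : ∫ ω, InnerProductSpace.toDual ℝ _ (ystar ω) =
      InnerProductSpace.toDual ℝ _ (∫ ω, ystar ω) :=
    (InnerProductSpace.toDual ℝ _).toLinearIsometry.integral_comp_comm ystar
  rwa [hcomm] at hΦ

/-- Let `Y` be a finite nonempty subset of `ℝ^N`, `η > 0`, and
`Φ(x) = E_γ[max_{y∈Y} ⟨y, x + η·γ⟩]` for `γ` an `N`-dimensional standard Gaussian
vector. If at the point `x₀` the maximizer `y*(γ) = argmax_{y∈Y} ⟨y, x₀ + η·γ⟩` is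
unique for almost every `γ`, then `Φ` is differentiable at `x₀` with
`∇Φ(x₀) = E_γ[y*(γ)]`. -/
theorem gradient_of_smoothed_potential
    {Ω : Type*} [MeasureSpace Ω] [IsProbabilityMeasure (ℙ : Measure Ω)]
    (N : ℕ)
    (γ : Ω → EuclideanSpace ℝ (Fin N))
    (hγmeas : Measurable γ)
    (hγindep : iIndepFun (fun i ω => γ ω i) ℙ)
    (hγgauss : ∀ i, Measure.map (fun ω => γ ω i) ℙ = gaussianReal 0 1)
    (Y : Finset (EuclideanSpace ℝ (Fin N))) (hY : Y.Nonempty)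
    (η : ℝ) (hη : 0 < η)
    (x₀ : EuclideanSpace ℝ (Fin N))
    -- `ystar ω` is the a.e.-unique maximizer of `y ↦ ⟨y, x₀ + η·γ ω⟩` over `Y`
    (ystar : Ω → EuclideanSpace ℝ (Fin N))
    (hstar : ∀ᵐ ω ∂(ℙ : Measure Ω), ystar ω ∈ Y ∧
      ∀ y ∈ Y, y ≠ ystar ω → ⟪y, x₀ + η • γ ω⟫ < ⟪ystar ω, x₀ + η • γ ω⟫) :
    HasGradientAt (fun x => ∫ ω, Y.sup' hY (fun y => ⟪y, x + η • γ ω⟫))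
      (∫ ω, ystar ω) x₀ :=
  gradient_of_smoothed_potential_general N γ hγmeas hγgauss Y hY η x₀ ystar hstar
end
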